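/- arXiv:1104.2773 — 2 statements merged into one kernel-verified Lean document; each statement's English description precedes it below -/
import Mathlib

section
/- Let G = {θ ∈ ℝ^d : q(θ) ≤ 0} where q is convex and C¹ with ∇q(θ) ≠ 0 for all θ with q(θ) = 0, and G compact with nonempty interior. Then for any θ ∈ G and y ∈ ℝ^d, lim_{γ ↓ 0} γ^{-1}(P_G(θ + γy) − θ) = y − (yᵀe(θ))⁺ e(θ) 𝟙_{∂G}(θ), where P_G is the Euclidean projection onto G, e(θ) := ∇q(θ)/|∇q(θ)|, (x)⁺ := max(x,0), and 𝟙_{∂G}(θ) = 1 if q(θ) = 0 and 0 otherwise. -/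
/-! The rescaled displacement `γ⁻¹ (P(θ + γ y) - θ)` lies in the cone spanned by `G - θ`, and its
distance to `y` is asymptotically at most `‖y - v‖` for every direction `v` along which `G` can be
entered to first order. If such a `v` is also the projection of `y` onto that cone, Pythagoras
forces the rescaled displacement to converge to `v`. At an interior point every direction can be
entered and `v = y`. At a boundary point the gradient inequality puts `G - θ` into the halfspace
`⟪·, e θ⟫ ≤ 0`, onto which `y` projects to `y - ⟪y, e θ⟫⁺ e θ`; an interior point of `G`, where
`q < 0` because it cannot be a local maximum of `q` on `{q = 0}`, shows that every direction of
this halfspace can be entered. -/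

open Filter Topology RealInnerProductSpace

section Projection

variable {E : Type*} [NormedAddCommGroup E] [InnerProductSpace ℝ E]

/-- `dist(θ + γ v, G) = o(γ)` as `γ ↓ 0`: a derivable tangent vector in the sense of
Rockafellar–Wets. -/
def IsDerivableTangent (G : Set E) (θ v : E) : Prop :=
  ∀ ε > 0, ∀ᶠ γ in 𝓝[>] (0 : ℝ), ∃ w ∈ G, ‖θ + γ • v - w‖ ≤ γ * ε

lemma isDerivableTangent_of_mem_interior {G : Set E} {θ : E} (hθ : θ ∈ interior G) (v : E) :
    IsDerivableTangent G θ v := by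
  intro ε hε
  have hline : Tendsto (fun γ : ℝ => θ + γ • v) (𝓝[>] 0) (𝓝 θ) := by
    have : Continuous fun γ : ℝ => θ + γ • v := by fun_prop
    simpa using (this.tendsto 0).mono_left nhdsWithin_le_nhds
  filter_upwards [hline (mem_interior_iff_mem_nhds.1 hθ), self_mem_nhdsWithin] with γ hγG hγ
  exact ⟨_, hγG, by simpa using mul_nonneg (le_of_lt hγ) hε.le⟩

lemma norm_sub_sq_le_of_inner_sub_nonpos {y v z : E} (h : ⟪y - v, z - v⟫ ≤ 0) :
    ‖z - v‖ ^ 2 ≤ ‖y - z‖ ^ 2 - ‖y - v‖ ^ 2 := by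
  rw [show y - z = (y - v) - (z - v) by abel, norm_sub_sq_real (y - v) (z - v)]
  linarith

lemma tendsto_of_inner_sub_nonpos_of_norm_sub_le {ι : Type*} {l : Filter ι} {f : ι → E} {y v : E}
    (hvar : ∀ᶠ i in l, ⟪y - v, f i - v⟫ ≤ 0)
    (hnear : ∀ ε > 0, ∀ᶠ i in l, ‖y - f i‖ ≤ ‖y - v‖ + ε) :
    Tendsto f l (𝓝 v) := by
  rw [Metric.tendsto_nhds]
  intro η hη
  set A := ‖y - v‖
  set ε := η ^ 2 / (2 * (2 * A + η))
  have hA : 0 ≤ A := norm_nonneg _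
  have hε : 0 < ε := by positivity
  have hεη : ε ≤ η := by
    rw [div_le_iff₀ (by positivity)]
    nlinarith
  have hεA : ε * (2 * A + η) = η ^ 2 / 2 := by
    simp only [ε]
    field_simp
  filter_upwards [hvar, hnear ε hε] with i hvar hnear
  rw [dist_eq_norm, ← pow_lt_pow_iff_left₀ (norm_nonneg _) hη.le two_ne_zero]
  have hsq : ‖y - f i‖ ^ 2 ≤ (A + ε) ^ 2 := pow_le_pow_left₀ (norm_nonneg _) hnear 2
  calc ‖f i - v‖ ^ 2 ≤ ‖y - f i‖ ^ 2 - A ^ 2 := norm_sub_sq_le_of_inner_sub_nonpos hvar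
    _ ≤ ε * (2 * A + η) := by nlinarith
    _ < η ^ 2 := by rw [hεA]; linarith [pow_pos hη 2]

theorem tendsto_inv_smul_sub_of_isDerivableTangent {G : Set E} {P : E → E}
    (hP : ∀ x, P x ∈ G ∧ ∀ z ∈ G, ‖x - P x‖ ≤ ‖x - z‖) {θ v y : E}
    (hv : IsDerivableTangent G θ v)
    (hvar : ∀ x ∈ G, ∀ c : ℝ, 0 < c → ⟪y - v, c • (x - θ) - v⟫ ≤ 0) :
    Tendsto (fun γ : ℝ => γ⁻¹ • (P (θ + γ • y) - θ)) (𝓝[>] 0) (𝓝 v) := by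
  refine tendsto_of_inner_sub_nonpos_of_norm_sub_le (y := y) ?_ fun ε hε => ?_
  · filter_upwards [self_mem_nhdsWithin] with γ hγ
    exact hvar _ (hP _).1 _ (inv_pos.2 hγ)
  · filter_upwards [hv ε hε, self_mem_nhdsWithin] with γ ⟨w, hwG, hw⟩ (hγ : 0 < γ)
    have hscale : ∀ u : E, ‖u‖ = γ⁻¹ * ‖γ • u‖ := fun u => by
      rw [norm_smul, Real.norm_of_nonneg hγ.le, inv_mul_cancel_left₀ hγ.ne']
    calc ‖y - γ⁻¹ • (P (θ + γ • y) - θ)‖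
        = γ⁻¹ * ‖θ + γ • y - P (θ + γ • y)‖ := by
          rw [hscale, smul_sub, smul_smul, mul_inv_cancel₀ hγ.ne', one_smul]
          congr 2; abel
      _ ≤ γ⁻¹ * ‖θ + γ • y - w‖ := by gcongr; exact (hP _).2 w hwG
      _ ≤ γ⁻¹ * (‖γ • (y - v)‖ + ‖θ + γ • v - w‖) := by
          gcongr
          rw [show θ + γ • y - w = γ • (y - v) + (θ + γ • v - w) by rw [smul_sub]; abel]
          exact norm_add_le _ _
      _ ≤ ‖y - v‖ + ε := by
          rw [mul_add, ← hscale]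
          gcongr
          rw [inv_mul_le_iff₀ hγ]
          exact hw

section Halfspace

variable {e y : E}

lemma inner_sub_max_inner_smul_nonpos (he : ‖e‖ = 1) :
    ⟪y - max ⟪y, e⟫ 0 • e, e⟫ ≤ 0 := by
  rw [inner_sub_left, real_inner_smul_left, real_inner_self_eq_norm_sq, he]
  linarith [le_max_left ⟪y, e⟫ 0]

lemma inner_max_inner_smul_sub_nonpos (he : ‖e‖ = 1) {z : E} (hz : ⟪z, e⟫ ≤ 0) :
    ⟪max ⟪y, e⟫ 0 • e, z - (y - max ⟪y, e⟫ 0 • e)⟫ ≤ 0 := by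
  rw [real_inner_smul_left, inner_sub_right, inner_sub_right, real_inner_smul_right,
    real_inner_self_eq_norm_sq, he, real_inner_comm z, real_inner_comm y]
  rcases le_total ⟪y, e⟫ 0 with hα | hα
  · simp [max_eq_right hα]
  · rw [max_eq_left hα]
    nlinarith

end Halfspace

section Sublevel

variable [CompleteSpace E] {q : E → ℝ} {g x : E}

lemma HasGradientAt.hasDerivAt_comp_add_smul (h : HasGradientAt q g x) (v : E) :
    HasDerivAt (fun s : ℝ => q (x + s • v)) ⟪g, v⟫ 0 := by
  have hline : HasDerivAt (fun s : ℝ => x + s • v) v 0 :=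
    ((hasDerivAt_id (0 : ℝ)).smul_const v).const_add x |>.congr_deriv (one_smul ℝ v)
  have hq : HasFDerivAt q (InnerProductSpace.toDual ℝ E g) (x + (0 : ℝ) • v) := by
    simpa using h.hasFDerivAt
  simpa [Function.comp_def] using hq.comp_hasDerivAt 0 hline

lemma ConvexOn.inner_gradient_le (hq : ConvexOn ℝ Set.univ q) (h : HasGradientAt q g x) (z : E) :
    ⟪g, z - x⟫ ≤ q z - q x := by
  have hconv : ConvexOn ℝ Set.univ fun s : ℝ => q (x + s • (z - x)) := by
    simpa [Function.comp_def, AffineMap.lineMap_apply, add_comm] using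
      hq.comp_affineMap (AffineMap.lineMap x z)
  simpa [slope_def_field] using hconv.le_slope_of_hasDerivAt (Set.mem_univ 0) (Set.mem_univ 1)
    zero_lt_one (h.hasDerivAt_comp_add_smul (z - x))

lemma HasGradientAt.eventually_lt_zero (h : HasGradientAt q g x) (hx : q x ≤ 0) {v : E}
    (hv : ⟪g, v⟫ < 0) : ∀ᶠ γ in 𝓝[>] (0 : ℝ), q (x + γ • v) < 0 := by
  have hslope := (h.hasDerivAt_comp_add_smul v).tendsto_slope_zero_right
  filter_upwards [hslope.eventually_lt_const hv, self_mem_nhdsWithin] with γ hγq (hγ : 0 < γ)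
  simp only [zero_add, zero_smul, add_zero, smul_eq_mul] at hγq
  nlinarith [inv_pos.2 hγ, mul_inv_cancel₀ hγ.ne']

lemma lt_zero_of_mem_interior_setOf_le (hgrad : q x = 0 → gradient q x ≠ 0)
    (hx : x ∈ interior {x | q x ≤ 0}) : q x < 0 := by
  have hle : x ∈ {x | q x ≤ 0} := interior_subset hx
  refine lt_of_le_of_ne hle fun hx0 => hgrad hx0 ?_
  have hmax : IsLocalMax q x :=
    Filter.mem_of_superset (mem_interior_iff_mem_nhds.1 hx) fun z hz => hx0 ▸ hz
  simp [gradient, hmax.fderiv_eq_zero]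

lemma isDerivableTangent_setOf_le_of_inner_nonpos (hq : ConvexOn ℝ Set.univ q)
    (h : HasGradientAt q g x) (hx : q x = 0) {z : E} (hz : q z < 0) {v : E} (hv : ⟪g, v⟫ ≤ 0) :
    IsDerivableTangent {x | q x ≤ 0} x v := by
  intro ε hε
  set s := ε / (‖z - x‖ + 1)
  have hs : 0 < s := by positivity
  have hsε : s * ‖z - x‖ ≤ ε := by
    rw [div_mul_eq_mul_div, div_le_iff₀ (by positivity)]
    nlinarith [norm_nonneg (z - x)]
  have hdesc : ⟪g, v + s • (z - x)⟫ < 0 := by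
    rw [inner_add_right, real_inner_smul_right]
    nlinarith [hq.inner_gradient_le h z]
  filter_upwards [h.eventually_lt_zero hx.le hdesc, self_mem_nhdsWithin] with γ hγq (hγ : 0 < γ)
  refine ⟨_, hγq.le, ?_⟩
  rw [show x + γ • v - (x + γ • (v + s • (z - x))) = -((γ * s) • (z - x)) by module, norm_neg,
    norm_smul, Real.norm_of_nonneg (by positivity), mul_assoc]
  gcongr

theorem tendsto_inv_smul_sub_setOf_le_of_eq_zero (hq : ConvexOn ℝ Set.univ q)
    (h : HasGradientAt q g x) (hg : g ≠ 0) (hx : q x = 0) {z : E} (hz : q z < 0) {P : E → E}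
    (hP : ∀ w, P w ∈ {x | q x ≤ 0} ∧ ∀ z ∈ {x | q x ≤ 0}, ‖w - P w‖ ≤ ‖w - z‖) (y : E) :
    Tendsto (fun γ : ℝ => γ⁻¹ • (P (x + γ • y) - x)) (𝓝[>] 0)
      (𝓝 (y - max ⟪y, ‖g‖⁻¹ • g⟫ 0 • (‖g‖⁻¹ • g))) := by
  set e := ‖g‖⁻¹ • g
  have hg_pos : 0 < ‖g‖ := norm_pos_iff.2 hg
  have he : ‖e‖ = 1 := by simp [e, norm_smul, hg_pos.ne']
  have hg_eq : g = ‖g‖ • e := by simp [e, smul_smul, hg_pos.ne']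
  refine tendsto_inv_smul_sub_of_isDerivableTangent hP ?_ fun w hw c hc => ?_
  · refine isDerivableTangent_setOf_le_of_inner_nonpos hq h hx hz ?_
    rw [hg_eq, real_inner_smul_left, real_inner_comm]
    exact mul_nonpos_of_nonneg_of_nonpos hg_pos.le (inner_sub_max_inner_smul_nonpos he)
  · rw [sub_sub_cancel]
    refine inner_max_inner_smul_sub_nonpos he ?_
    have hgw := hq.inner_gradient_le h w
    rw [hg_eq, real_inner_smul_left, real_inner_comm] at hgw
    rw [real_inner_smul_left]
    have hw : q w ≤ 0 := hw
    nlinarith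

end Sublevel

end Projection

theorem stmt_5_general (d : ℕ)
    (q : EuclideanSpace ℝ (Fin d) → ℝ)
    (hq_conv : ConvexOn ℝ Set.univ q)
    (hq_smooth : ContDiff ℝ 1 q)
    (hq_grad : ∀ θ, q θ = 0 → gradient q θ ≠ 0)
    (G : Set (EuclideanSpace ℝ (Fin d))) (hG : G = {θ | q θ ≤ 0})
    (hG_int : (interior G).Nonempty)
    (P : EuclideanSpace ℝ (Fin d) → EuclideanSpace ℝ (Fin d))
    (hP : ∀ x, P x ∈ G ∧ ∀ z ∈ G, ‖x - P x‖ ≤ ‖x - z‖)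
    (e : EuclideanSpace ℝ (Fin d) → EuclideanSpace ℝ (Fin d))
    (he : e = fun θ => ‖gradient q θ‖⁻¹ • gradient q θ)
    (θ : EuclideanSpace ℝ (Fin d)) (hθ : θ ∈ G) (y : EuclideanSpace ℝ (Fin d)) :
    Tendsto (fun γ : ℝ => γ⁻¹ • (P (θ + γ • y) - θ)) (𝓝[>] 0)
      (𝓝 (y - (if q θ = 0 then (max (inner ℝ y (e θ) : ℝ) 0) • e θ else 0))) := by
  subst hG he
  have hq_diff : Differentiable ℝ q := hq_smooth.differentiable one_ne_zero
  by_cases hθ0 : q θ = 0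
  · obtain ⟨z, hz⟩ := hG_int
    rw [if_pos hθ0]
    exact tendsto_inv_smul_sub_setOf_le_of_eq_zero hq_conv (hq_diff θ).hasGradientAt
      (hq_grad θ hθ0) hθ0 (lt_zero_of_mem_interior_setOf_le (hq_grad z) hz) hP y
  · rw [if_neg hθ0, sub_zero]
    have hθ_int : θ ∈ interior {θ | q θ ≤ 0} := mem_interior_iff_mem_nhds.2 <|
      (hq_diff.continuous.continuousAt.eventually_lt continuousAt_const
        (lt_of_le_of_ne hθ hθ0)).mono fun _ hx => hx.le
    exact tendsto_inv_smul_sub_of_isDerivableTangent hP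
      (isDerivableTangent_of_mem_interior hθ_int y) (by simp)

/-- Directional derivative of the projection onto `G = {q ≤ 0}` at a point `θ ∈ G`:
`lim_{γ↓0} γ⁻¹(P_G(θ + γy) − θ) = y − (yᵀe(θ))⁺ e(θ) 𝟙_{∂G}(θ)`. -/
theorem stmt_5 (d : ℕ) (hd : 1 ≤ d)
    (q : EuclideanSpace ℝ (Fin d) → ℝ)
    (hq_conv : ConvexOn ℝ Set.univ q)
    (hq_smooth : ContDiff ℝ 1 q)
    (hq_grad : ∀ θ, q θ = 0 → gradient q θ ≠ 0)
    (G : Set (EuclideanSpace ℝ (Fin d))) (hG : G = {θ | q θ ≤ 0})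
    (hG_compact : IsCompact G) (hG_int : (interior G).Nonempty)
    (P : EuclideanSpace ℝ (Fin d) → EuclideanSpace ℝ (Fin d))
    (hP : ∀ x, P x ∈ G ∧ ∀ z ∈ G, ‖x - P x‖ ≤ ‖x - z‖)
    (e : EuclideanSpace ℝ (Fin d) → EuclideanSpace ℝ (Fin d))
    (he : e = fun θ => ‖gradient q θ‖⁻¹ • gradient q θ)
    (θ : EuclideanSpace ℝ (Fin d)) (hθ : θ ∈ G) (y : EuclideanSpace ℝ (Fin d)) :
    Tendsto (fun γ : ℝ => γ⁻¹ • (P (θ + γ • y) - θ)) (𝓝[>] 0)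
      (𝓝 (y - (if q θ = 0 then (max (inner ℝ y (e θ) : ℝ) 0) • e θ else 0))) :=
  stmt_5_general d q hq_conv hq_smooth hq_grad G hG hG_int P hP e he θ hθ y
end

section
/- Let f : ℝ^d → ℝ be C¹ with ∇f L-Lipschitz, let (γ_n) be positive with ∑γ_n = ∞ and ∑γ_n² < ∞, and suppose the level sets of f are compact and the set 𝓛 = {θ : ∇f(θ) = 0} is such that f(𝓛) has empty interior. Then the deterministic gradient iteration t_{n+1} = t_n − γ_{n+1}∇f(t_n), started from any t₀, satisfies d(t_n, 𝓛) → 0. -/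
/-!
Once the step sizes satisfy `L γ ≤ 1/2`, the descent lemma
`f (x - γ ∇f x) ≤ f x - γ (1 - L γ) ‖∇f x‖²` makes `f` decrease along the iterates, so they stay in
a compact sublevel set and `∑ γₙ₊₁ ‖∇f tₙ‖² < ∞`. As `∇f` is `L`-Lipschitz,
`‖∇f tₙ₊₁‖² ≤ (1 + 3 L γₙ₊₁) ‖∇f tₙ‖²`, and these increments are summable, so `‖∇f tₙ‖²` converges;
since `∑ γₙ = ∞` its limit is `0`. Hence every limit point of `(tₙ)` is critical, and compactness
gives `d(tₙ, 𝓛) → 0`.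
-/

open Filter Topology Set

theorem summable_of_add_le_of_bddBelow {x u : ℕ → ℝ} (hu : ∀ n, 0 ≤ u n)
    (hx : BddBelow (range x)) (h : ∀ n, x (n + 1) + u n ≤ x n) : Summable u := by
  obtain ⟨B, hB⟩ := hx
  have hsum : ∀ n, ∑ i ∈ Finset.range n, u i ≤ x 0 - x n := by
    intro n
    induction n with
    | zero => simp
    | succ n ih => rw [Finset.sum_range_succ]; linarith [h n]
  exact summable_of_sum_range_le (c := x 0 - B) hu fun n =>
    (hsum n).trans (by linarith [hB (mem_range_self n)])

theorem exists_tendsto_of_le_add_of_summable {x u : ℕ → ℝ} (hx : BddBelow (range x))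
    (hu : Summable u) (h : ∀ n, x (n + 1) ≤ x n + u n) : ∃ l, Tendsto x atTop (𝓝 l) := by
  set S := fun n => ∑ i ∈ Finset.range n, u i
  have hS : Tendsto S atTop (𝓝 (∑' i, u i)) := hu.hasSum.tendsto_sum_nat
  have hanti : Antitone (x - S) := antitone_nat_of_succ_le fun n => by
    simp only [Pi.sub_apply, S, Finset.sum_range_succ]; linarith [h n]
  obtain ⟨B, hB⟩ := hx
  obtain ⟨C, hC⟩ := hS.bddAbove_range
  have hbdd : BddBelow (range (x - S)) := ⟨B - C, by
    rintro _ ⟨n, rfl⟩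
    simp only [Pi.sub_apply]
    linarith [hB (mem_range_self n), hC (mem_range_self n)]⟩
  exact ⟨_, by simpa using (tendsto_atTop_ciInf hanti hbdd).add hS⟩

theorem eq_zero_of_tendsto_of_summable_mul {x a : ℕ → ℝ} {l : ℝ} (hx : Tendsto x atTop (𝓝 l))
    (hs : Summable fun n => a n * x n) (ha : ¬Summable a) : l = 0 := by
  by_contra hl
  have hl2 : 0 < |l| / 2 := by positivity
  have hev : ∀ᶠ n in atTop, |l| / 2 ≤ |x n| :=
    hx.abs.eventually (le_mem_nhds (half_lt_self (abs_pos.2 hl)))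
  refine ha (.of_norm_bounded_eventually_nat (hs.abs.mul_left (2 / |l|)) ?_)
  filter_upwards [hev] with n hn
  calc ‖a n‖ = 2 / |l| * (|a n| * (|l| / 2)) := by field_simp; rw [Real.norm_eq_abs]
    _ ≤ 2 / |l| * |a n * x n| := by rw [abs_mul]; gcongr

theorem tendsto_zero_of_tendsto_sq_zero {x : ℕ → ℝ} (hx : ∀ n, 0 ≤ x n)
    (h : Tendsto (fun n => x n ^ 2) atTop (𝓝 0)) : Tendsto x atTop (𝓝 0) := by
  simpa [Real.sqrt_sq (hx _)] using h.sqrt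

section Gradient

variable {E : Type*} [NormedAddCommGroup E] [InnerProductSpace ℝ E] [CompleteSpace E]
  {f : E → ℝ} {L : NNReal}

theorem le_add_inner_gradient_add_mul_norm_sq (hf : Differentiable ℝ f)
    (hL : LipschitzWith L (gradient f)) (x y : E) :
    f y ≤ f x + inner ℝ (gradient f x) (y - x) + L * ‖y - x‖ ^ 2 := by
  have bound : ∀ z ∈ Metric.closedBall x ‖y - x‖,
      ‖fderiv ℝ f z - fderiv ℝ f x‖ ≤ L * ‖y - x‖ := fun z hz => by
    rw [← toDual_gradient, ← toDual_gradient, ← map_sub, LinearIsometryEquiv.norm_map,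
      ← dist_eq_norm]
    exact (hL.dist_le_mul z x).trans (by gcongr; exact hz)
  have key := (convex_closedBall x ‖y - x‖).norm_image_sub_le_of_norm_fderiv_le'
    (fun z _ => hf z) bound (Metric.mem_closedBall_self (norm_nonneg _))
    (by rw [Metric.mem_closedBall, dist_eq_norm])
  rw [← inner_gradient_left, Real.norm_eq_abs] at key
  nlinarith [(abs_le.mp key).2]

theorem apply_sub_smul_gradient_le (hf : Differentiable ℝ f) (hL : LipschitzWith L (gradient f))
    (x : E) (s : ℝ) :
    f (x - s • gradient f x) ≤ f x - s * (1 - L * s) * ‖gradient f x‖ ^ 2 := by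
  have := le_add_inner_gradient_add_mul_norm_sq hf hL x (x - s • gradient f x)
  rw [sub_sub_cancel_left, inner_neg_right, real_inner_smul_right, real_inner_self_eq_norm_sq,
    norm_neg, norm_smul, Real.norm_eq_abs, mul_pow, sq_abs] at this
  linarith

theorem norm_gradient_sub_smul_gradient_le (hL : LipschitzWith L (gradient f)) (x : E) {s : ℝ}
    (hs : 0 ≤ s) : ‖gradient f (x - s • gradient f x)‖ ≤ (1 + L * s) * ‖gradient f x‖ := by
  have := hL.dist_le_mul (x - s • gradient f x) x
  rw [dist_eq_norm, dist_eq_norm, sub_sub_cancel_left, norm_neg, norm_smul, Real.norm_of_nonneg hs]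
    at this
  calc ‖gradient f (x - s • gradient f x)‖
      ≤ ‖gradient f x‖ + ‖gradient f (x - s • gradient f x) - gradient f x‖ :=
        norm_le_insert' _ _
    _ ≤ (1 + L * s) * ‖gradient f x‖ := by nlinarith

namespace GradientDescent

variable {a : ℕ → ℝ} {x : ℕ → E}

theorem apply_succ_add_le (hf : Differentiable ℝ f) (hL : LipschitzWith L (gradient f))
    (ha : ∀ n, 0 ≤ a n) (haL : ∀ n, L * a n ≤ 1 / 2)
    (hx : ∀ n, x (n + 1) = x n - a n • gradient f (x n)) (n : ℕ) :
    f (x (n + 1)) + a n / 2 * ‖gradient f (x n)‖ ^ 2 ≤ f (x n) := by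
  have := apply_sub_smul_gradient_le hf hL (x n) (a n)
  rw [← hx] at this
  nlinarith [mul_nonneg (mul_nonneg (ha n) (sub_nonneg.2 (haL n))) (sq_nonneg ‖gradient f (x n)‖)]

theorem antitone_apply (hf : Differentiable ℝ f) (hL : LipschitzWith L (gradient f))
    (ha : ∀ n, 0 ≤ a n) (haL : ∀ n, L * a n ≤ 1 / 2)
    (hx : ∀ n, x (n + 1) = x n - a n • gradient f (x n)) : Antitone (f ∘ x) :=
  antitone_nat_of_succ_le fun n =>
    (le_add_of_nonneg_right (mul_nonneg (div_nonneg (ha n) zero_le_two) (sq_nonneg _))).trans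
      (apply_succ_add_le hf hL ha haL hx n)

theorem norm_gradient_succ_sq_le (hL : LipschitzWith L (gradient f))
    (ha : ∀ n, 0 ≤ a n) (haL : ∀ n, L * a n ≤ 1 / 2)
    (hx : ∀ n, x (n + 1) = x n - a n • gradient f (x n)) (n : ℕ) :
    ‖gradient f (x (n + 1))‖ ^ 2 ≤
      ‖gradient f (x n)‖ ^ 2 + 3 * L * (a n * ‖gradient f (x n)‖ ^ 2) := by
  have h := norm_gradient_sub_smul_gradient_le hL (x n) (ha n)
  rw [← hx] at h
  have hL0 : (0 : ℝ) ≤ L := L.2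
  calc ‖gradient f (x (n + 1))‖ ^ 2 ≤ ((1 + L * a n) * ‖gradient f (x n)‖) ^ 2 := by gcongr
    _ ≤ _ := by
      nlinarith [mul_nonneg (mul_nonneg (mul_nonneg hL0 (ha n)) (sq_nonneg ‖gradient f (x n)‖))
        (sub_nonneg.2 (haL n))]

theorem tendsto_gradient_zero (hf : Differentiable ℝ f) (hL : LipschitzWith L (gradient f))
    (hbdd : BddBelow (range f)) (ha : ∀ n, 0 ≤ a n) (haL : ∀ n, L * a n ≤ 1 / 2)
    (ha_sum : ¬Summable a) (hx : ∀ n, x (n + 1) = x n - a n • gradient f (x n)) :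
    Tendsto (fun n => gradient f (x n)) atTop (𝓝 0) := by
  have hsum : Summable fun n => a n * ‖gradient f (x n)‖ ^ 2 := by
    have := summable_of_add_le_of_bddBelow (fun n => by have := ha n; positivity)
      (hbdd.mono (range_comp_subset_range x f)) (apply_succ_add_le hf hL ha haL hx)
    exact (this.mul_left 2).congr fun n => by ring
  obtain ⟨l, hl⟩ := exists_tendsto_of_le_add_of_summable (x := fun n => ‖gradient f (x n)‖ ^ 2)
    ⟨0, by rintro _ ⟨n, rfl⟩; exact sq_nonneg _⟩ (hsum.mul_left (3 * (L : ℝ)))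
    (norm_gradient_succ_sq_le hL ha haL hx)
  rw [eq_zero_of_tendsto_of_summable_mul hl hsum ha_sum] at hl
  exact tendsto_zero_iff_norm_tendsto_zero.2
    (tendsto_zero_of_tendsto_sq_zero (fun _ => norm_nonneg _) hl)

end GradientDescent

end Gradient

theorem bddBelow_range_of_isCompact_setOf_le {X : Type*} [TopologicalSpace X] {f : X → ℝ} {c : ℝ}
    (hc : IsCompact {x | f x ≤ c}) (hf : ContinuousOn f {x | f x ≤ c}) : BddBelow (range f) := by
  obtain ⟨b, hb⟩ := hc.bddBelow_image hf
  refine ⟨min b c, ?_⟩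
  rintro _ ⟨x, rfl⟩
  by_cases hx : f x ≤ c
  · exact (min_le_left _ _).trans (hb ⟨x, hx, rfl⟩)
  · exact (min_le_right _ _).trans (le_of_not_ge hx)

theorem IsCompact.tendsto_infDist_preimage {X Y : Type*} [PseudoMetricSpace X] [TopologicalSpace Y]
    [T2Space Y] {K : Set X} (hK : IsCompact K) {g : X → Y} (hg : ContinuousOn g K) {y : Y}
    {x : ℕ → X} (hxK : ∀ n, x n ∈ K) (hx : Tendsto (fun n => g (x n)) atTop (𝓝 y)) :
    Tendsto (fun n => Metric.infDist (x n) (g ⁻¹' {y})) atTop (𝓝 0) := by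
  refine tendsto_of_subseq_tendsto fun ns hns => ?_
  obtain ⟨z, hzK, φ, hφ, hz⟩ := hK.tendsto_subseq fun k => hxK (ns k)
  have hgz : g z = y := tendsto_nhds_unique
    ((hg z hzK).tendsto.comp (tendsto_nhdsWithin_iff.2 ⟨hz, .of_forall fun k => hxK _⟩))
    (hx.comp (hns.comp hφ.tendsto_atTop))
  refine ⟨φ, ?_⟩
  rw [← Metric.infDist_zero_of_mem (show z ∈ g ⁻¹' {y} from hgz)]
  exact ((Metric.continuous_infDist_pt _).tendsto z).comp hz

theorem stmt_12_general (d : ℕ)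
    (f : EuclideanSpace ℝ (Fin d) → ℝ)
    (hf : ContDiff ℝ 1 f)
    (L : NNReal) (hf_lip : LipschitzWith L (gradient f))
    (hlevel : ∀ c : ℝ, IsCompact {θ | f θ ≤ c})
    (𝓛 : Set (EuclideanSpace ℝ (Fin d))) (h𝓛 : 𝓛 = {θ | gradient f θ = 0})
    (γ : ℕ → ℝ) (hγpos : ∀ n, 0 < γ n)
    (hγ1 : ¬ Summable γ) (hγ2 : Summable (fun n => (γ n) ^ 2))
    (t : ℕ → EuclideanSpace ℝ (Fin d))
    (hrec : ∀ n, t (n + 1) = t n - γ (n + 1) • gradient f (t n)) :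
    Tendsto (fun n => Metric.infDist (t n) 𝓛) atTop (𝓝 0) := by
  subst h𝓛
  have hdiff : Differentiable ℝ f := hf.differentiable one_ne_zero
  have hγ0 : Tendsto γ atTop (𝓝 0) :=
    tendsto_zero_of_tendsto_sq_zero (fun n => (hγpos n).le) hγ2.tendsto_atTop_zero
  obtain ⟨N, hN⟩ := eventually_atTop.1 <|
    (hγ0.const_mul (L : ℝ)).eventually (ge_mem_nhds (by norm_num : (L : ℝ) * 0 < 1 / 2))
  -- restart the iteration at step `N`, from which on `L γ ≤ 1/2`
  rw [← tendsto_add_atTop_iff_nat N]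
  set a : ℕ → ℝ := fun k => γ (k + N + 1)
  set x := fun k => t (k + N)
  have hx : ∀ k, x (k + 1) = x k - a k • gradient f (x k) := fun k => by
    simpa [x, a, Nat.add_right_comm] using hrec (k + N)
  have ha : ∀ k, 0 ≤ a k := fun k => (hγpos _).le
  have haL : ∀ k, L * a k ≤ 1 / 2 := fun k => hN _ (by omega)
  have ha_sum : ¬Summable a := (summable_nat_add_iff (N + 1)).not.2 hγ1
  have hbdd := bddBelow_range_of_isCompact_setOf_le (hlevel 0) hf.continuous.continuousOn
  have hsub : ∀ k, x k ∈ {θ | f θ ≤ f (x 0)} := fun k =>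
    GradientDescent.antitone_apply hdiff hf_lip ha haL hx (Nat.zero_le k)
  exact (hlevel _).tendsto_infDist_preimage hf_lip.continuous.continuousOn hsub
    (GradientDescent.tendsto_gradient_zero hdiff hf_lip hbdd ha haL ha_sum hx)

/-- Convergence of the deterministic gradient iteration
`t_{n+1} = t_n − γ_{n+1} ∇f(t_n)` to the critical set `𝓛 = {∇f = 0}`. -/
theorem stmt_12 (d : ℕ) (hd : 1 ≤ d)
    (f : EuclideanSpace ℝ (Fin d) → ℝ)
    (hf : ContDiff ℝ 1 f)
    (L : NNReal) (hf_lip : LipschitzWith L (gradient f))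
    (hlevel : ∀ c : ℝ, IsCompact {θ | f θ ≤ c})
    (𝓛 : Set (EuclideanSpace ℝ (Fin d))) (h𝓛 : 𝓛 = {θ | gradient f θ = 0})
    (hfL : interior (f '' 𝓛) = ∅)
    (γ : ℕ → ℝ) (hγpos : ∀ n, 0 < γ n)
    (hγ1 : ¬ Summable γ) (hγ2 : Summable (fun n => (γ n) ^ 2))
    (t : ℕ → EuclideanSpace ℝ (Fin d))
    (hrec : ∀ n, t (n + 1) = t n - γ (n + 1) • gradient f (t n)) :
    Tendsto (fun n => Metric.infDist (t n) 𝓛) atTop (𝓝 0) :=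
  stmt_12_general d f hf L hf_lip hlevel 𝓛 h𝓛 γ hγpos hγ1 hγ2 t hrec
end
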